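/- arXiv:2104.00610 — 4 statements merged into one kernel-verified Lean document; each statement's English description precedes it below -/
import Mathlib

section
/- Let ν ≥ 0 and let (j_{ν,n})_{n≥1} be the positive zeros of the Bessel function J_ν. If ν ∈ [0, 1/2], then the difference sequence (j_{ν,n+1} − j_{ν,n})_{n≥1} is nondecreasing and converges to π as n → +∞. If ν ≥ 1/2, then the sequence (j_{ν,n+1} − j_{ν,n})_{n≥1} is nonincreasing and converges to π as n → +∞. -/
/-!
With `u(x) = √x J_ν(x)`, Bessel's equation becomes `u'' + q u = 0` with
`q(x) = 1 + (1/4 - ν²)/x²`, and the `j_{ν,n}` are the consecutive zeros of `u`. The Sturm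
comparison theorem (via the Wronskian), applied to `u` and to its translate by one gap, shows that
the gaps increase where `q` decreases (`ν < 1/2`) and decrease where `q` increases (`ν > 1/2`).
Comparison with `sin (k x)` traps the gap after `j_{ν,n}` between `π` and `π / √q(j_{ν,n})`, which
tends to `π` because `q → 1`; for `ν = 1/2`, `q ≡ 1` and every gap equals `π`.
-/

open Filter

/-- The Bessel function of the first kind of order `ν`, defined via its power series
`J_ν(x) = Σ_{m≥0} ((−1)^m / (m! Γ(ν+m+1))) (x/2)^{2m+ν}` (real powers). -/
noncomputable def besselJ (ν : ℝ) (x : ℝ) : ℝ :=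
  ∑' m : ℕ, (-1 : ℝ) ^ m / (m.factorial * Real.Gamma (ν + m + 1)) *
    (x / 2) ^ (2 * (m : ℝ) + ν)

open Set Topology Real
open scoped Nat

theorem IsPreconnected.mul_pos_of_ne_zero {α : Type*} [TopologicalSpace α] {s : Set α}
    {f : α → ℝ} (hs : IsPreconnected s) (hf : ContinuousOn f s) (hne : ∀ x ∈ s, f x ≠ 0)
    {x y : α} (hx : x ∈ s) (hy : y ∈ s) : 0 < f x * f y := by
  by_contra! h
  rcases mul_nonpos_iff.1 h with ⟨hfx, hfy⟩ | ⟨hfx, hfy⟩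
  · obtain ⟨z, hz, hfz⟩ := hs.intermediate_value hy hx hf ⟨hfy, hfx⟩
    exact hne z hz hfz
  · obtain ⟨z, hz, hfz⟩ := hs.intermediate_value hx hy hf ⟨hfx, hfy⟩
    exact hne z hz hfz

def IsSturmSolution (q : ℝ → ℝ) (s : Set ℝ) (f f' : ℝ → ℝ) : Prop :=
  ∀ x ∈ s, HasDerivAt f (f' x) x ∧ HasDerivAt f' (-(q x * f x)) x

namespace IsSturmSolution

variable {q f f' g : ℝ → ℝ} {s t : Set ℝ}

theorem mono (h : IsSturmSolution q s f f') (hts : t ⊆ s) : IsSturmSolution q t f f' :=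
  fun x hx => h x (hts hx)

theorem continuousOn (h : IsSturmSolution q s f f') : ContinuousOn f s :=
  fun x hx => (h x hx).1.continuousAt.continuousWithinAt

theorem congr (h : IsSturmSolution q s f f') (hs : IsOpen s) (hfg : EqOn f g s) :
    IsSturmSolution q s g f' := fun x hx =>
  ⟨(h x hx).1.congr_of_eventuallyEq (Filter.eventuallyEq_of_mem (hs.mem_nhds hx) hfg.symm),
    hfg hx ▸ (h x hx).2⟩

theorem const_mul (h : IsSturmSolution q s f f') (c : ℝ) :
    IsSturmSolution q s (fun x => c * f x) (fun x => c * f' x) := fun x hx =>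
  ⟨(h x hx).1.const_mul c, ((h x hx).2.const_mul c).congr_deriv (by ring)⟩

theorem comp_sub_const (h : IsSturmSolution q s f f') (δ : ℝ) (hts : MapsTo (· - δ) t s) :
    IsSturmSolution (fun x => q (x - δ)) t (fun x => f (x - δ)) (fun x => f' (x - δ)) :=
  fun x hx => ⟨(h _ (hts hx)).1.comp_sub_const x δ, (h _ (hts hx)).2.comp_sub_const x δ⟩

end IsSturmSolution

theorem isSturmSolution_sin (k c : ℝ) :
    IsSturmSolution (fun _ => k ^ 2) univ (fun x => sin (k * (x - c)))
      (fun x => k * cos (k * (x - c))) := by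
  intro x _
  have hlin : HasDerivAt (fun y => k * (y - c)) k x := by
    simpa using ((hasDerivAt_id x).sub_const c).const_mul k
  refine ⟨hlin.sin.congr_deriv (mul_comm _ _), (hlin.cos.const_mul k).congr_deriv ?_⟩
  ring

theorem sin_mul_sub_pos {k c x : ℝ} (hk : 0 < k) (hx : x ∈ Ioo c (c + π / k)) :
    0 < sin (k * (x - c)) := by
  apply sin_pos_of_pos_of_lt_pi (mul_pos hk (sub_pos.2 hx.1))
  have := hx.2
  rw [← lt_div_iff₀' hk]
  linarith

-- Multiplying by `x ^ α` removes the first-order term of `G'' + (2α / x) G' + G = 0`.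
theorem isSturmSolution_rpow_mul {α : ℝ} {G G' : ℝ → ℝ}
    (hG : ∀ x > 0, HasDerivAt G (G' x) x)
    (hG' : ∀ x > 0, HasDerivAt G' (-(2 * α / x * G' x + G x)) x) :
    IsSturmSolution (fun x => 1 - α * (α - 1) / x ^ 2) (Ioi 0) (fun x => x ^ α * G x)
      (fun x => α * x ^ (α - 1) * G x + x ^ α * G' x) := by
  intro x hx
  have hpow : ∀ β, HasDerivAt (fun y => y ^ β) (β * x ^ (β - 1)) x := fun β =>
    hasDerivAt_rpow_const (Or.inl (ne_of_gt hx))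
  refine ⟨((hpow α).mul (hG x hx)).congr_deriv (by ring),
    ((((hpow (α - 1)).const_mul α).mul (hG x hx)).add ((hpow α).mul (hG' x hx))).congr_deriv ?_⟩
  have hx0 : x ≠ 0 := ne_of_gt hx
  rw [rpow_sub hx, rpow_sub hx, rpow_one]
  field_simp
  ring

section Sturm

variable {q Q f f' g g' : ℝ → ℝ} {a b p : ℝ}

theorem sturm_comparison_of_pos (hab : a < b) (hf : IsSturmSolution q (Icc a b) f f')
    (hg : IsSturmSolution Q (Icc a b) g g') (hfa : f a = 0) (hfb : f b = 0) (hga : g a = 0)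
    (hf_pos : ∀ x ∈ Ioo a b, 0 < f x) (hg_pos : ∀ x ∈ Ioc a b, 0 < g x)
    (hqQ : ∀ x ∈ Ioo a b, q x < Q x) : False := by
  -- The Wronskian `W = f g' - f' g` vanishes at `a` and decreases, so `W < 0` on `(a, b)`;
  -- hence `f / g` increases on `(a, b]`, although it is positive inside and vanishes at `b`.
  set W := fun x => f x * g' x - f' x * g x with hW_def
  have hW : ∀ x ∈ Icc a b, HasDerivAt W ((q x - Q x) * (f x * g x)) x := fun x hx =>
    (((hf x hx).1.mul (hg x hx).2).sub ((hf x hx).2.mul (hg x hx).1)).congr_deriv (by ring)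
  have hW_anti : StrictAntiOn W (Icc a b) := by
    refine strictAntiOn_of_deriv_neg (convex_Icc a b)
      (fun x hx => (hW x hx).continuousAt.continuousWithinAt) fun x hx => ?_
    rw [interior_Icc] at hx
    rw [(hW x (Ioo_subset_Icc_self hx)).deriv]
    exact mul_neg_of_neg_of_pos (sub_neg.2 (hqQ x hx))
      (mul_pos (hf_pos x hx) (hg_pos x (Ioo_subset_Ioc_self hx)))
  have hW_neg : ∀ x ∈ Ioo a b, W x < 0 := fun x hx => by
    simpa [W, hfa, hga] using hW_anti (left_mem_Icc.2 hab.le) (Ioo_subset_Icc_self hx) hx.1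
  have hquot : StrictMonoOn (fun x => f x / g x) (Ioc a b) := by
    have hd : ∀ x ∈ Ioc a b, HasDerivAt (fun x => f x / g x) (-W x / g x ^ 2) x := fun x hx =>
      ((hf x (Ioc_subset_Icc_self hx)).1.div (hg x (Ioc_subset_Icc_self hx)).1
        (hg_pos x hx).ne').congr_deriv (by rw [hW_def]; ring)
    refine strictMonoOn_of_deriv_pos (convex_Ioc a b)
      (fun x hx => (hd x hx).continuousAt.continuousWithinAt) fun x hx => ?_
    rw [interior_Ioc] at hx
    rw [(hd x (Ioo_subset_Ioc_self hx)).deriv]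
    exact div_pos (neg_pos.2 (hW_neg x hx)) (pow_pos (hg_pos x (Ioo_subset_Ioc_self hx)) 2)
  have hm : (a + b) / 2 ∈ Ioo a b := ⟨by linarith, by linarith⟩
  have := hquot (Ioo_subset_Ioc_self hm) (right_mem_Ioc.2 hab) hm.2
  simp only [hfb, zero_div] at this
  exact this.not_gt (div_pos (hf_pos _ hm) (hg_pos _ (Ioo_subset_Ioc_self hm)))

theorem sturm_comparison (hab : a < b) (hf : IsSturmSolution q (Icc a b) f f')
    (hg : IsSturmSolution Q (Icc a b) g g') (hfa : f a = 0) (hfb : f b = 0)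
    (hf_ne : ∀ x ∈ Ioo a b, f x ≠ 0) (hga : g a = 0) (hqQ : ∀ x ∈ Ioo a b, q x < Q x) :
    ∃ x ∈ Ioc a b, g x = 0 := by
  by_contra! hg_ne
  obtain ⟨x₀, hx₀⟩ := nonempty_Ioo.2 hab
  refine sturm_comparison_of_pos hab (hf.const_mul (f x₀)) (hg.const_mul (g b))
    (by simp [hfa]) (by simp [hfb]) (by simp [hga]) (fun x hx => ?_) (fun x hx => ?_) hqQ
  · exact isPreconnected_Ioo.mul_pos_of_ne_zero ((hf.mono Ioo_subset_Icc_self).continuousOn)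
      hf_ne hx₀ hx
  · exact isPreconnected_Ioc.mul_pos_of_ne_zero ((hg.mono Ioc_subset_Icc_self).continuousOn)
      hg_ne (right_mem_Ioc.2 hab) hx

theorem gap_le_gap_of_strictAntiOn (hf : IsSturmSolution q (Icc p b) f f')
    (hq : StrictAntiOn q (Icc p b)) (hpa : p < a) (hab : a < b) (hfp : f p = 0) (hfa : f a = 0)
    (hfb : f b = 0) (hne₁ : ∀ x ∈ Ioo p a, f x ≠ 0) (hne₂ : ∀ x ∈ Ioo a b, f x ≠ 0) :
    a - p ≤ b - a := by
  -- otherwise the translate `f (· - (a - p))` would vanish strictly between `p` and `a`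
  by_contra! h
  have hmaps : MapsTo (· - (a - p)) (Icc a b) (Icc p b) := fun x hx =>
    ⟨by linarith [hx.1], by linarith [hx.2]⟩
  obtain ⟨x, hx, hfx⟩ := sturm_comparison hab (hf.mono (Icc_subset_Icc_left hpa.le))
    (hf.comp_sub_const (a - p) hmaps) hfa hfb hne₂ (by simpa using hfp) fun x hx =>
      hq ⟨by linarith [hx.1], by linarith [hx.2]⟩ ⟨by linarith [hx.1], hx.2.le⟩
        (by linarith)
  exact hne₁ _ ⟨by linarith [hx.1], by linarith [hx.2]⟩ hfx

theorem gap_le_gap_of_strictMonoOn (hf : IsSturmSolution q (Icc p b) f f')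
    (hq : StrictMonoOn q (Icc p b)) (hpa : p < a) (hfp : f p = 0) (hfa : f a = 0)
    (hne₁ : ∀ x ∈ Ioo p a, f x ≠ 0) (hne₂ : ∀ x ∈ Ioo a b, f x ≠ 0) :
    b - a ≤ a - p := by
  -- otherwise `f` would vanish on `(a, 2a - p] ⊆ (a, b)`, by comparison with its translate
  by_contra! h
  have hmaps : MapsTo (· - (a - p)) (Icc a (a + (a - p))) (Icc p b) := fun x hx =>
    ⟨by linarith [hx.1], by linarith [hx.2]⟩
  obtain ⟨x, hx, hfx⟩ := sturm_comparison (by linarith) (hf.comp_sub_const (a - p) hmaps)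
    (hf.mono (Icc_subset_Icc (by linarith) (by linarith))) (by simpa using hfp)
    (by simpa using hfa) (fun x hx => hne₁ _ ⟨by linarith [hx.1], by linarith [hx.2]⟩) hfa
    fun x hx => hq ⟨by linarith [hx.1], by linarith [hx.2]⟩
      ⟨by linarith [hx.1], by linarith [hx.2]⟩ (by linarith)
  exact hne₂ x ⟨hx.1, by linarith [hx.2]⟩ hfx

theorem gap_le_pi_div_of_sq_le {k : ℝ} (hk : 0 < k) (hf : IsSturmSolution q (Icc a b) f f')
    (hab : a < b) (hfa : f a = 0) (hne : ∀ x ∈ Ioo a b, f x ≠ 0)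
    (hq : ∀ x ∈ Ioo a b, k ^ 2 ≤ q x) : b - a ≤ π / k := by
  by_contra! h
  -- compare with a sine whose half-period `π / k'` still fits in `(a, b)`
  obtain ⟨k', hk'₁, hk'₂⟩ := exists_between ((div_lt_iff₀ (sub_pos.2 hab)).2
    ((div_lt_iff₀' hk).1 h))
  have hk' : 0 < k' := lt_trans (div_pos pi_pos (sub_pos.2 hab)) hk'₁
  have hfit : a + π / k' < b := by
    rw [div_lt_iff₀ (sub_pos.2 hab)] at hk'₁
    linarith [(div_lt_iff₀' hk').2 hk'₁]
  have hsq : k' ^ 2 < k ^ 2 := pow_lt_pow_left₀ hk'₂ hk'.le two_ne_zero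
  obtain ⟨x, hx, hfx⟩ := sturm_comparison (lt_add_of_pos_right a (div_pos pi_pos hk'))
    ((isSturmSolution_sin k' a).mono (subset_univ _))
    (hf.mono (Icc_subset_Icc_right hfit.le)) (by simp)
    (by rw [add_sub_cancel_left, mul_div_cancel₀ _ hk'.ne', sin_pi])
    (fun x hx => (sin_mul_sub_pos hk' hx).ne') hfa
    fun x hx => hsq.trans_le (hq x ⟨hx.1, hx.2.trans hfit⟩)
  exact hne x ⟨hx.1, hx.2.trans_lt hfit⟩ hfx

theorem pi_div_le_gap_of_le_sq {k : ℝ} (hk : 0 < k) (hf : IsSturmSolution q (Icc a b) f f')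
    (hab : a < b) (hfa : f a = 0) (hfb : f b = 0) (hne : ∀ x ∈ Ioo a b, f x ≠ 0)
    (hq : ∀ x ∈ Ioo a b, q x ≤ k ^ 2) : π / k ≤ b - a := by
  by_contra! h
  -- compare with a sine whose half-period `π / k'` still exceeds `b - a`
  obtain ⟨k', hk'₁, hk'₂⟩ := exists_between ((lt_div_iff₀ (sub_pos.2 hab)).2
    ((lt_div_iff₀' hk).1 h))
  have hk' : 0 < k' := hk.trans hk'₁
  have hfit : b < a + π / k' := by
    have := (lt_div_iff₀' hk').2 ((lt_div_iff₀ (sub_pos.2 hab)).1 hk'₂)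
    linarith
  have hsq : k ^ 2 < k' ^ 2 := pow_lt_pow_left₀ hk'₁ hk.le two_ne_zero
  obtain ⟨x, hx, hsin⟩ := sturm_comparison hab hf
    ((isSturmSolution_sin k' a).mono (subset_univ _)) hfa hfb hne (by simp)
    fun x hx => (hq x hx).trans_lt hsq
  exact (sin_mul_sub_pos hk' ⟨hx.1, hx.2.trans_lt hfit⟩).ne' hsin

theorem gap_mem_uIcc_of_mem_uIcc {c₁ c₂ : ℝ} (hc₁ : 0 < c₁) (hc₂ : 0 < c₂)
    (hf : IsSturmSolution q (Icc a b) f f') (hab : a < b) (hfa : f a = 0) (hfb : f b = 0)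
    (hne : ∀ x ∈ Ioo a b, f x ≠ 0) (hq : ∀ x ∈ Ioo a b, q x ∈ uIcc c₁ c₂) :
    b - a ∈ uIcc (π / √c₁) (π / √c₂) := by
  wlog h : c₁ ≤ c₂ generalizing c₁ c₂
  · rw [uIcc_comm]
    exact this hc₂ hc₁ (fun x hx => uIcc_comm c₁ c₂ ▸ hq x hx) (le_of_not_ge h)
  simp only [uIcc_of_le h] at hq
  refine Icc_subset_uIcc' ⟨pi_div_le_gap_of_le_sq (sqrt_pos.2 hc₂) hf hab hfa hfb hne
    fun x hx => ?_, gap_le_pi_div_of_sq_le (sqrt_pos.2 hc₁) hf hab hfa hne fun x hx => ?_⟩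
  · rw [sq_sqrt hc₂.le]
    exact (hq x hx).2
  · rw [sq_sqrt hc₁.le]
    exact (hq x hx).1

end Sturm

def FactorialDecay (a : ℕ → ℝ) : Prop := ∃ C, ∀ m, |a m| ≤ C / m !

def derivCoeff (a : ℕ → ℝ) (m : ℕ) : ℝ := (m + 1) * a (m + 1)

noncomputable def powSeries (a : ℕ → ℝ) (t : ℝ) : ℝ := ∑' m, a m * t ^ m

section PowSeries

variable {a : ℕ → ℝ}

theorem FactorialDecay.summable_mul_pow (ha : FactorialDecay a) (t : ℝ) :
    Summable fun m => a m * t ^ m := by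
  obtain ⟨C, hC⟩ := ha
  refine .of_norm_bounded ((summable_pow_div_factorial |t|).mul_left C) fun m => ?_
  rw [norm_mul, norm_pow, norm_eq_abs, norm_eq_abs]
  calc |a m| * |t| ^ m ≤ C / m ! * |t| ^ m := by gcongr; exact hC m
    _ = C * (|t| ^ m / m !) := by ring

theorem factorialDecay_derivCoeff (ha : FactorialDecay a) : FactorialDecay (derivCoeff a) := by
  obtain ⟨C, hC⟩ := ha
  refine ⟨C, fun m => ?_⟩
  rw [derivCoeff, abs_mul, abs_of_pos (by positivity : (0 : ℝ) < m + 1)]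
  calc ((m : ℝ) + 1) * |a (m + 1)| ≤ (m + 1) * (C / (m + 1)!) := by gcongr; exact hC _
    _ = C / m ! := by rw [Nat.factorial_succ]; push_cast; field_simp

theorem FactorialDecay.hasDerivAt_powSeries (ha : FactorialDecay a) (t : ℝ) :
    HasDerivAt (powSeries a) (powSeries (derivCoeff a) t) t := by
  obtain ⟨C, hC⟩ := id ha
  set R := |t| + 1
  have hR : 1 ≤ R := le_add_of_nonneg_left (abs_nonneg t)
  have ht : t ∈ Ioo (-R) R := abs_lt.1 (lt_add_one |t|)
  have hbound : ∀ m, ∀ s ∈ Ioo (-R) R, ‖a m * (m * s ^ (m - 1))‖ ≤ C * ((2 * R) ^ m / m !) := by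
    intro m s hs
    have hs : |s| ^ (m - 1) ≤ R ^ m :=
      (pow_le_pow_left₀ (abs_nonneg s) (abs_le.2 ⟨hs.1.le, hs.2.le⟩) _).trans
        (pow_le_pow_right₀ hR (m.sub_le 1))
    have hm : (m : ℝ) ≤ 2 ^ m := by exact_mod_cast m.lt_two_pow_self.le
    rw [norm_mul, norm_mul, norm_pow, norm_eq_abs, norm_eq_abs, Nat.abs_cast, mul_pow]
    calc |a m| * (m * |s| ^ (m - 1)) ≤ C / m ! * (2 ^ m * R ^ m) :=
          mul_le_mul (hC m) (mul_le_mul hm hs (by positivity) (by positivity)) (by positivity)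
            ((abs_nonneg _).trans (hC m))
      _ = C * (2 ^ m * R ^ m / m !) := by ring
  have hsum : Summable fun m => C * ((2 * R) ^ m / m !) :=
    (summable_pow_div_factorial _).mul_left C
  have key := hasDerivAt_tsum_of_isPreconnected hsum isOpen_Ioo isPreconnected_Ioo
    (fun m s _ => (hasDerivAt_pow m s).const_mul (a m)) hbound ht (ha.summable_mul_pow t) ht
  refine (key.congr_deriv ?_ : HasDerivAt (powSeries a) _ t)
  rw [(Summable.of_norm_bounded hsum fun m => hbound m t ht).tsum_eq_zero_add]
  simp only [powSeries, derivCoeff, Nat.cast_zero, zero_mul, mul_zero, zero_add, Nat.cast_add,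
    Nat.cast_one, Nat.add_sub_cancel]
  exact tsum_congr fun m => by ring

theorem hasSum_natCast_mul_pow (ha : FactorialDecay (derivCoeff a)) (t : ℝ) :
    HasSum (fun m => m * a m * t ^ m) (t * powSeries (derivCoeff a) t) := by
  rw [← hasSum_nat_add_iff' 1]
  have hshift : (fun m : ℕ => ((m : ℝ) + 1) * a (m + 1) * t ^ (m + 1))
      = fun m => t * (derivCoeff a m * t ^ m) := by
    ext m
    rw [derivCoeff]
    ring
  simpa [hshift, powSeries] using ((ha.summable_mul_pow t).hasSum).mul_left t

theorem hasDerivAt_powSeries_sq_div_four (ha : FactorialDecay a) (x : ℝ) :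
    HasDerivAt (fun y => powSeries a (y ^ 2 / 4))
      (x / 2 * powSeries (derivCoeff a) (x ^ 2 / 4)) x := by
  have hsq : HasDerivAt (fun y : ℝ => y ^ 2 / 4) (x / 2) x :=
    ((hasDerivAt_pow 2 x).div_const 4).congr_deriv (by push_cast; ring)
  exact ((ha.hasDerivAt_powSeries _).comp x hsq).congr_deriv (mul_comm _ _)

end PowSeries

noncomputable def besselCoeff (ν : ℝ) (m : ℕ) : ℝ := (-1) ^ m / (m ! * Gamma (ν + m + 1))

noncomputable def besselPotential (ν x : ℝ) : ℝ := 1 + (1 / 4 - ν ^ 2) / x ^ 2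

section Bessel

variable {ν : ℝ}

theorem besselCoeff_succ (hν : 0 ≤ ν) (m : ℕ) :
    (m + 1) * (ν + m + 1) * besselCoeff ν (m + 1) = -besselCoeff ν m := by
  have hΓ : Gamma (ν + (m + 1 : ℕ) + 1) = (ν + m + 1) * Gamma (ν + m + 1) := by
    rw [Nat.cast_succ, ← add_assoc, Gamma_add_one (by positivity)]
  have := (Gamma_pos_of_pos (by positivity : 0 < ν + m + 1)).ne'
  simp only [besselCoeff, hΓ, Nat.factorial_succ, Nat.cast_mul, pow_succ]
  push_cast
  field_simp

theorem factorialDecay_besselCoeff (hν : 0 ≤ ν) : FactorialDecay (besselCoeff ν) := by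
  refine ⟨|besselCoeff ν 0|, fun m => ?_⟩
  induction m with
  | zero => simp
  | succ m ih =>
    have h1 : (1 : ℝ) ≤ ν + m + 1 := by linarith [m.cast_nonneg (α := ℝ)]
    have hstep : (m + 1) * |besselCoeff ν (m + 1)| ≤ |besselCoeff ν m| := by
      calc ((m : ℝ) + 1) * |besselCoeff ν (m + 1)|
          ≤ (m + 1) * (ν + m + 1) * |besselCoeff ν (m + 1)| := by
            gcongr
            exact le_mul_of_one_le_right (by positivity) h1
        _ = |besselCoeff ν m| := by
            rw [← abs_neg (besselCoeff ν m), ← besselCoeff_succ hν m, abs_mul,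
              abs_of_pos (by positivity : (0 : ℝ) < (m + 1) * (ν + m + 1))]
    calc |besselCoeff ν (m + 1)| ≤ |besselCoeff ν m| / (m + 1) :=
          (le_div_iff₀' (by positivity)).2 hstep
      _ ≤ |besselCoeff ν 0| / m ! / (m + 1) := by gcongr
      _ = |besselCoeff ν 0| / (m + 1)! := by
          rw [Nat.factorial_succ, Nat.cast_mul, div_div, mul_comm]; push_cast; ring

theorem powSeries_besselCoeff_ode (hν : 0 ≤ ν) (t : ℝ) :
    t * powSeries (derivCoeff (derivCoeff (besselCoeff ν))) t
      + (ν + 1) * powSeries (derivCoeff (besselCoeff ν)) t + powSeries (besselCoeff ν) t = 0 := by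
  have hb := factorialDecay_besselCoeff hν
  have hb' := factorialDecay_derivCoeff hb
  have hsum := ((hasSum_natCast_mul_pow (factorialDecay_derivCoeff hb') t).add
    ((hb'.summable_mul_pow t).hasSum.mul_left (ν + 1))).add (hb.summable_mul_pow t).hasSum
  refine hsum.unique ?_
  convert hasSum_zero with m
  simp only [derivCoeff]
  linear_combination t ^ m * besselCoeff_succ hν m

theorem besselJ_eq_rpow_mul_powSeries {x : ℝ} (hx : 0 < x) :
    besselJ ν x = (x / 2) ^ ν * powSeries (besselCoeff ν) (x ^ 2 / 4) := by
  rw [besselJ, powSeries, ← tsum_mul_left]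
  congr 1 with m
  rw [rpow_add (by positivity), show 2 * (m : ℝ) = ((2 * m : ℕ) : ℝ) by push_cast; ring,
    rpow_natCast, pow_mul, besselCoeff]
  ring

theorem isSturmSolution_sqrt_mul_besselJ (hν : 0 ≤ ν) :
    ∃ f', IsSturmSolution (besselPotential ν) (Ioi 0) (fun x => √x * besselJ ν x) f' := by
  set g := powSeries (besselCoeff ν)
  set g' := powSeries (derivCoeff (besselCoeff ν))
  have hb := factorialDecay_besselCoeff hν
  -- `G x = g (x² / 4)` solves `G'' + (2ν + 1) / x G' + G = 0`
  have hG' : ∀ x > 0, HasDerivAt (fun y => y / 2 * g' (y ^ 2 / 4))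
      (-(2 * (ν + 1 / 2) / x * (x / 2 * g' (x ^ 2 / 4)) + g (x ^ 2 / 4))) x := by
    intro x hx
    refine (((hasDerivAt_id' x).div_const 2).mul
      (hasDerivAt_powSeries_sq_div_four (factorialDecay_derivCoeff hb) x)).congr_deriv ?_
    have hode := powSeries_besselCoeff_ode hν (x ^ 2 / 4)
    field_simp
    linear_combination 4 * hode
  have h := isSturmSolution_rpow_mul (fun x _ => hasDerivAt_powSeries_sq_div_four hb x) hG'
  have hq : (fun x : ℝ => 1 - (ν + 1 / 2) * (ν + 1 / 2 - 1) / x ^ 2) = besselPotential ν := by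
    ext x
    rw [besselPotential]
    ring
  rw [hq] at h
  refine ⟨_, (h.const_mul (2 ^ ν)⁻¹).congr isOpen_Ioi fun x (hx : 0 < x) => ?_⟩
  dsimp only
  rw [besselJ_eq_rpow_mul_powSeries hx, sqrt_eq_rpow, div_rpow hx.le zero_le_two, rpow_add hx]
  field_simp

theorem besselPotential_strictAntiOn (hν : ν ^ 2 < 1 / 4) :
    StrictAntiOn (besselPotential ν) (Ioi 0) := by
  intro x (hx : 0 < x) y _ hxy
  have hc : 0 < 1 / 4 - ν ^ 2 := by linarith
  simp only [besselPotential]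
  gcongr

theorem besselPotential_strictMonoOn (hν : 1 / 4 < ν ^ 2) :
    StrictMonoOn (besselPotential ν) (Ioi 0) := by
  intro x (hx : 0 < x) y _ hxy
  have hc : 0 < ν ^ 2 - 1 / 4 := by linarith
  simp only [besselPotential, ← neg_sub (ν ^ 2), neg_div, ← sub_eq_add_neg]
  gcongr

theorem besselPotential_mem_uIcc {a x : ℝ} (ha : 0 < a) (hax : a ≤ x) :
    besselPotential ν x ∈ uIcc 1 (besselPotential ν a) := by
  have hinv : 1 / x ^ 2 ≤ 1 / a ^ 2 := by gcongr
  simp only [besselPotential, div_eq_mul_one_div (1 / 4 - ν ^ 2)]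
  rcases le_total 0 (1 / 4 - ν ^ 2) with hc | hc
  · exact Icc_subset_uIcc ⟨by nlinarith [one_div_nonneg.2 (sq_nonneg x)], by nlinarith⟩
  · exact Icc_subset_uIcc' ⟨by nlinarith, by nlinarith [one_div_nonneg.2 (sq_nonneg x)]⟩

theorem tendsto_besselPotential_atTop : Tendsto (besselPotential ν) atTop (𝓝 1) := by
  show Tendsto (fun x => 1 + (1 / 4 - ν ^ 2) / x ^ 2) atTop (𝓝 1)
  simpa only [add_zero] using (tendsto_const_nhds (x := (1 : ℝ))).add
    ((tendsto_const_nhds (x := 1 / 4 - ν ^ 2)).div_atTop (tendsto_pow_atTop two_ne_zero))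

end Bessel

def IsConsecutiveZeros (f : ℝ → ℝ) (j : ℕ → ℝ) : Prop :=
  ∀ n ≥ 1, 0 < j n ∧ j n < j (n + 1) ∧ f (j n) = 0 ∧ ∀ x ∈ Ioo (j n) (j (n + 1)), f x ≠ 0

theorem isConsecutiveZeros_of_strictMonoOn {f : ℝ → ℝ} {j : ℕ → ℝ}
    (hpos : ∀ n ≥ 1, 0 < j n) (hzero : ∀ n ≥ 1, f (j n) = 0) (hmono : StrictMonoOn j (Ici 1))
    (henum : ∀ x > 0, f x = 0 → ∃ n ≥ 1, j n = x) : IsConsecutiveZeros f j := by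
  intro n hn
  have hn1 : n + 1 ∈ Ici 1 := by simp
  refine ⟨hpos n hn, hmono hn hn1 (lt_add_one n), hzero n hn, fun x hx hfx => ?_⟩
  obtain ⟨k, hk, rfl⟩ := henum x ((hpos n hn).trans hx.1) hfx
  have h₁ := (hmono.lt_iff_lt hn hk).1 hx.1
  have h₂ := (hmono.lt_iff_lt hk hn1).1 hx.2
  omega

theorem tendsto_atTop_of_le_sub {u : ℕ → ℝ} {ε : ℝ} (hε : 0 < ε)
    (h : ∀ n ≥ 1, ε ≤ u (n + 1) - u n) : Tendsto u atTop atTop := by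
  have key : ∀ n : ℕ, u 1 + n * ε ≤ u (n + 1) := by
    intro n
    induction n with
    | zero => simp
    | succ n ih =>
      push_cast
      linarith [h (n + 1) (by omega)]
  rw [← tendsto_add_atTop_iff_nat 1]
  exact tendsto_atTop_mono key
    (tendsto_atTop_add_const_left _ _ (tendsto_natCast_atTop_atTop.atTop_mul_const hε))

namespace IsConsecutiveZeros

variable {q f f' : ℝ → ℝ} {j : ℕ → ℝ}

theorem monotoneOn (hj : IsConsecutiveZeros f j) : MonotoneOn j (Ici 1) :=
  monotoneOn_nat_Ici_of_le_succ fun n hn => (hj n hn).2.1.le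

theorem gap_mem_uIcc (hj : IsConsecutiveZeros f j) (hf : IsSturmSolution q (Ioi 0) f f')
    (hq : ∀ a x, 0 < a → a ≤ x → q x ∈ uIcc 1 (q a)) {n : ℕ} (hn : 1 ≤ n)
    (hqn : 0 < q (j n)) : j (n + 1) - j n ∈ uIcc π (π / √(q (j n))) := by
  obtain ⟨h0, hlt, hz, hne⟩ := hj n hn
  simpa using gap_mem_uIcc_of_mem_uIcc one_pos hqn
    (hf.mono fun x hx => h0.trans_le hx.1) hlt hz (hj (n + 1) (by omega)).2.2.1 hne
    fun x hx => hq _ _ h0 hx.1.le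

theorem tendsto_gap (hj : IsConsecutiveZeros f j) (hf : IsSturmSolution q (Ioi 0) f f')
    (hq : ∀ a x, 0 < a → a ≤ x → q x ∈ uIcc 1 (q a)) (hq_lim : Tendsto q atTop (𝓝 1)) :
    Tendsto (fun n => j (n + 1) - j n) atTop (𝓝 π) := by
  -- beyond `j 1`, `q ≤ max 1 (q (j 1))` bounds the gaps from below, so `j → ∞`
  have hM : 0 < √(max 1 (q (j 1))) := sqrt_pos.2 (lt_max_of_lt_left one_pos)
  have hj_top : Tendsto j atTop atTop := by
    refine tendsto_atTop_of_le_sub (div_pos pi_pos hM) fun n hn => ?_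
    obtain ⟨h0, hlt, hz, hne⟩ := hj n hn
    refine pi_div_le_gap_of_le_sq hM (hf.mono fun x hx => h0.trans_le hx.1) hlt hz
      (hj (n + 1) (by omega)).2.2.1 hne fun x hx => ?_
    rw [sq_sqrt (zero_lt_one.trans_le (le_max_left _ _)).le]
    exact (hq _ x (hj 1 le_rfl).1 ((hj.monotoneOn self_mem_Ici hn hn).trans hx.1.le)).2
  have hqj : Tendsto (fun n => q (j n)) atTop (𝓝 1) := hq_lim.comp hj_top
  have hbound : Tendsto (fun n => π / √(q (j n))) atTop (𝓝 π) := by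
    have := (tendsto_const_nhds (x := π)).div hqj.sqrt (by simp)
    rwa [sqrt_one, div_one] at this
  rw [tendsto_iff_norm_sub_tendsto_zero]
  refine squeeze_zero' (.of_forall fun n => norm_nonneg _) ?_
    (tendsto_iff_norm_sub_tendsto_zero.1 hbound)
  filter_upwards [eventually_ge_atTop 1, hqj.eventually (lt_mem_nhds one_pos)] with n hn hqn
  exact abs_sub_left_of_mem_uIcc (hj.gap_mem_uIcc hf hq hn hqn)

theorem monotoneOn_gap (hj : IsConsecutiveZeros f j) (hf : IsSturmSolution q (Ioi 0) f f')
    (hq : StrictAntiOn q (Ioi 0)) : MonotoneOn (fun n => j (n + 1) - j n) (Ici 1) :=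
  monotoneOn_nat_Ici_of_le_succ fun n hn => by
    obtain ⟨h0, hlt, hz, hne⟩ := hj n hn
    obtain ⟨-, hlt', hz', hne'⟩ := hj (n + 1) (by omega)
    have hsub : Icc (j n) (j (n + 2)) ⊆ Ioi 0 := fun x hx => h0.trans_le hx.1
    exact gap_le_gap_of_strictAntiOn (hf.mono hsub) (hq.mono hsub) hlt hlt' hz hz'
      (hj (n + 2) (by omega)).2.2.1 hne hne'

theorem antitoneOn_gap (hj : IsConsecutiveZeros f j) (hf : IsSturmSolution q (Ioi 0) f f')
    (hq : StrictMonoOn q (Ioi 0)) : AntitoneOn (fun n => j (n + 1) - j n) (Ici 1) :=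
  antitoneOn_nat_Ici_of_succ_le fun n hn => by
    obtain ⟨h0, hlt, hz, hne⟩ := hj n hn
    obtain ⟨-, -, hz', hne'⟩ := hj (n + 1) (by omega)
    have hsub : Icc (j n) (j (n + 2)) ⊆ Ioi 0 := fun x hx => h0.trans_le hx.1
    exact gap_le_gap_of_strictMonoOn (hf.mono hsub) (hq.mono hsub) hlt hz hz' hne hne'

end IsConsecutiveZeros

/-- If `(j n)_{n ≥ 1}` is the strictly increasing enumeration of the
positive zeros of `J_ν`, then for `ν ∈ [0, 1/2]` the difference sequence
`(j (n+1) − j n)` is nondecreasing and tends to `π`, while for `ν ≥ 1/2` it is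
nonincreasing and tends to `π`. -/
theorem stmt_3 (ν : ℝ) (hν : 0 ≤ ν) (j : ℕ → ℝ)
    (hpos : ∀ n : ℕ, 1 ≤ n → 0 < j n)
    (hzero : ∀ n : ℕ, 1 ≤ n → besselJ ν (j n) = 0)
    (hmono : ∀ n m : ℕ, 1 ≤ n → n < m → j n < j m)
    (henum : ∀ x : ℝ, 0 < x → besselJ ν x = 0 → ∃ n : ℕ, 1 ≤ n ∧ j n = x) :
    (ν ≤ 1 / 2 →
      (∀ n m : ℕ, 1 ≤ n → n ≤ m → j (n + 1) - j n ≤ j (m + 1) - j m) ∧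
      Tendsto (fun n : ℕ => j (n + 1) - j n) atTop (nhds Real.pi)) ∧
    (1 / 2 ≤ ν →
      (∀ n m : ℕ, 1 ≤ n → n ≤ m → j (m + 1) - j m ≤ j (n + 1) - j n) ∧
      Tendsto (fun n : ℕ => j (n + 1) - j n) atTop (nhds Real.pi)) := by
  obtain ⟨f', hf⟩ := isSturmSolution_sqrt_mul_besselJ hν
  have hj : IsConsecutiveZeros (fun x => √x * besselJ ν x) j :=
    isConsecutiveZeros_of_strictMonoOn hpos (fun n hn => by simp [hzero n hn])
      (fun n hn m _ h => hmono n m hn h) fun x hx h =>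
        henum x hx ((mul_eq_zero.1 h).resolve_left (sqrt_ne_zero'.2 hx))
  have hq : ∀ a x, 0 < a → a ≤ x → besselPotential ν x ∈ uIcc 1 (besselPotential ν a) :=
    fun _ _ => besselPotential_mem_uIcc
  have hlim := hj.tendsto_gap hf hq tendsto_besselPotential_atTop
  rcases lt_trichotomy ν (1 / 2) with hlt | rfl | hgt
  · have hmon := hj.monotoneOn_gap hf (besselPotential_strictAntiOn (by nlinarith))
    exact ⟨fun _ => ⟨fun n m hn hnm => hmon hn (hn.trans hnm) hnm, hlim⟩,
      fun h => absurd h hlt.not_ge⟩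
  · have hπ : ∀ n ≥ 1, j (n + 1) - j n = π := fun n hn => by
      have hq₁ : besselPotential (1 / 2) (j n) = 1 := by norm_num [besselPotential]
      have := hj.gap_mem_uIcc hf hq hn (by rw [hq₁]; exact one_pos)
      rwa [hq₁, sqrt_one, div_one, uIcc_self, mem_singleton_iff] at this
    exact ⟨fun _ => ⟨fun n m hn hnm => (hπ n hn).trans_le (hπ m (hn.trans hnm)).ge, hlim⟩,
      fun _ => ⟨fun n m hn hnm => (hπ m (hn.trans hnm)).trans_le (hπ n hn).ge, hlim⟩⟩
  · have hanti := hj.antitoneOn_gap hf (besselPotential_strictMonoOn (by nlinarith))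
    exact ⟨fun h => absurd h hgt.not_ge, fun _ =>
      ⟨fun n m hn hnm => hanti hn (hn.trans hnm) hnm, hlim⟩⟩
end

section
/- Let ν ∈ [0, 1/2] and let (j_n)_{n≥1} be a strictly increasing sequence of positive real numbers such that (n + ν/2 − 1/4)π ≤ j_n ≤ (n + ν/4 − 1/8)π for all n ≥ 1 and such that the difference sequence (j_{n+1} − j_n)_{n≥1} is nondecreasing. Then for all n ≥ m ≥ 1 one has j_n² − j_m² ≥ (7π²/16)(n² − m²). -/
/-!
Squaring the lower bound for `j n` and the upper bound for `j m` bounds `j n ^ 2 - j m ^ 2`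
below by `π ^ 2 ((n + 2b) ^ 2 - (m + b) ^ 2)` with `b = ν / 4 - 1 / 8 ≥ -1 / 8`, and for
`n ≥ m + 1` this quadratic already exceeds `7 / 16 (n ^ 2 - m ^ 2)`.
-/

theorem seven_div_sixteen_mul_sq_sub_sq_le {b m n : ℝ} (hb : -1 / 8 ≤ b) (hm : 0 ≤ m)
    (hmn : m + 1 ≤ n) :
    7 / 16 * (n ^ 2 - m ^ 2) ≤ (n + 2 * b) ^ 2 - (m + b) ^ 2 := by
  -- The difference is `9/16 (n² - m²) + 2b (2n - m) + 3b² ≥ 9/16 (n + m) - (2n - m)/4 ≥ 0`.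
  nlinarith [sq_nonneg b, mul_le_mul_of_nonneg_left hb (by linarith : (0 : ℝ) ≤ 2 * n - m)]

theorem stmt_7_general (ν : ℝ) (hν0 : 0 ≤ ν) (j : ℕ → ℝ)
    (hlow : ∀ n : ℕ, 1 ≤ n → ((n : ℝ) + ν / 2 - 1 / 4) * Real.pi ≤ j n)
    (hup : ∀ n : ℕ, 1 ≤ n → j n ≤ ((n : ℝ) + ν / 4 - 1 / 8) * Real.pi) :
    ∀ n m : ℕ, 1 ≤ m → m ≤ n →
      7 * Real.pi ^ 2 / 16 * ((n : ℝ) ^ 2 - (m : ℝ) ^ 2) ≤ j n ^ 2 - j m ^ 2 := by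
  intro n m hm hmn
  obtain rfl | hlt := hmn.eq_or_lt
  · simp
  have hm1 : (1 : ℝ) ≤ m := by exact_mod_cast hm
  have hmn1 : (m : ℝ) + 1 ≤ n := by exact_mod_cast hlt
  obtain ⟨b, hb⟩ : ∃ b : ℝ, b = ν / 4 - 1 / 8 := ⟨_, rfl⟩
  have hjn : ((n + 2 * b) * Real.pi) ^ 2 ≤ j n ^ 2 := by
    refine pow_le_pow_left₀ (by nlinarith [Real.pi_pos]) ?_ 2
    rw [hb]; linarith [hlow n (hm.trans hlt.le)]
  have hjm : j m ^ 2 ≤ ((m + b) * Real.pi) ^ 2 :=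
    pow_le_pow_left₀ ((mul_nonneg (by linarith) Real.pi_pos.le).trans (hlow m hm))
      (by rw [hb]; linarith [hup m hm]) 2
  calc 7 * Real.pi ^ 2 / 16 * ((n : ℝ) ^ 2 - (m : ℝ) ^ 2)
      = Real.pi ^ 2 * (7 / 16 * ((n : ℝ) ^ 2 - (m : ℝ) ^ 2)) := by ring
    _ ≤ Real.pi ^ 2 * ((n + 2 * b) ^ 2 - (m + b) ^ 2) := by
        gcongr
        exact seven_div_sixteen_mul_sq_sub_sq_le (by linarith) (by linarith) hmn1
    _ = ((n + 2 * b) * Real.pi) ^ 2 - ((m + b) * Real.pi) ^ 2 := by ring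
    _ ≤ j n ^ 2 - j m ^ 2 := sub_le_sub hjn hjm

/-- If `ν ∈ [0, 1/2]` and `(j n)_{n≥1}` is a strictly increasing
sequence of positive reals with `(n + ν/2 − 1/4)π ≤ j n ≤ (n + ν/4 − 1/8)π` whose
difference sequence is nondecreasing, then `j n² − j m² ≥ (7π²/16)(n² − m²)` for all
`n ≥ m ≥ 1`. -/
theorem stmt_7 (ν : ℝ) (hν0 : 0 ≤ ν) (hν : ν ≤ 1 / 2) (j : ℕ → ℝ)
    (hpos : ∀ n : ℕ, 1 ≤ n → 0 < j n)
    (hmono : ∀ n m : ℕ, 1 ≤ n → n < m → j n < j m)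
    (hlow : ∀ n : ℕ, 1 ≤ n → ((n : ℝ) + ν / 2 - 1 / 4) * Real.pi ≤ j n)
    (hup : ∀ n : ℕ, 1 ≤ n → j n ≤ ((n : ℝ) + ν / 4 - 1 / 8) * Real.pi)
    (hdiff : ∀ n m : ℕ, 1 ≤ n → n ≤ m → j (n + 1) - j n ≤ j (m + 1) - j m) :
    ∀ n m : ℕ, 1 ≤ m → m ≤ n →
      7 * Real.pi ^ 2 / 16 * ((n : ℝ) ^ 2 - (m : ℝ) ^ 2) ≤ j n ^ 2 - j m ^ 2 :=
  stmt_7_general ν hν0 j hlow hup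
end

section
/- Let (λ_n)_{n≥1} be a sequence of real numbers satisfying |λ_n − λ_m| ≥ ρ|n² − m²| for all n, m ≥ 1 and some constant ρ > 0, and let c > 0. Define the sequence (Λ_n)_{n≥1} by Λ_{2n−1} = λ_n and Λ_{2n} = λ_n + c for all n ≥ 1. Then there exists an integer q ≥ 1 such that |Λ_n − Λ_m| ≥ (ρ/8)|n² − m²| for all n, m ≥ q with |n − m| ≥ q. -/
/-!
Every index `n ≥ 1` of the merged sequence comes from the index `a = ⌈n/2⌉` of the original
one, with `Λ n - λ a ∈ [0, c]`. Hence `|Λ n - Λ m| ≥ ρ |a² - b²| - c`, and `4 |a² - b²|`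
differs from `|n² - m²|` by `O(n + m)`. Once `|n - m| ≥ q`, the gap `|n² - m²| ≥ q (n + m)`
absorbs both this linear error and the shift `c`, at the price of the factor `1/8`.
-/

lemma add_le_mul_sq_sub_sq_of_le_two_mul {ρ c q x y A B : ℝ} (hρ : 0 ≤ ρ) (hq : 2 ≤ q)
    (hqc : 2 * ρ + 8 * c ≤ ρ * q) (hx : 0 ≤ x) (hxy : x + q ≤ y)
    (hxA : x ≤ 2 * A) (hAx : 2 * A ≤ x + 1) (hyB : y ≤ 2 * B) :
    ρ / 8 * (y ^ 2 - x ^ 2) + c ≤ ρ * (B ^ 2 - A ^ 2) := by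
  have hAB : y ^ 2 - (x + 1) ^ 2 ≤ 4 * (B ^ 2 - A ^ 2) := by nlinarith
  have hxy_sq : 4 * x + q ≤ y ^ 2 - x ^ 2 := by nlinarith
  nlinarith [mul_le_mul_of_nonneg_left hAB hρ, mul_le_mul_of_nonneg_left hxy_sq hρ]

section Merged

variable {lam Λ : ℕ → ℝ} {c : ℝ}

lemma merged_sub_parent_mem_Icc (hc : 0 ≤ c)
    (hodd : ∀ n : ℕ, 1 ≤ n → Λ (2 * n - 1) = lam n)
    (heven : ∀ n : ℕ, 1 ≤ n → Λ (2 * n) = lam n + c) {n : ℕ} (hn : 1 ≤ n) :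
    Λ n - lam ((n + 1) / 2) ∈ Set.Icc 0 c := by
  rcases Nat.even_or_odd' n with ⟨k, rfl | rfl⟩
  · rw [show (2 * k + 1) / 2 = k by omega, heven k (by omega)]
    simp [hc]
  · rw [show (2 * k + 1 + 1) / 2 = k + 1 by omega, show 2 * k + 1 = 2 * (k + 1) - 1 by omega,
      hodd (k + 1) (by omega)]
    simp [hc]

lemma mul_abs_sq_sub_sq_le_merged {ρ : ℝ} (hρ : 0 < ρ)
    (hgap : ∀ n m : ℕ, 1 ≤ n → 1 ≤ m →
      ρ * |(n : ℝ) ^ 2 - (m : ℝ) ^ 2| ≤ |lam n - lam m|)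
    (hc : 0 ≤ c) (hodd : ∀ n : ℕ, 1 ≤ n → Λ (2 * n - 1) = lam n)
    (heven : ∀ n : ℕ, 1 ≤ n → Λ (2 * n) = lam n + c) {q : ℕ} (hq : 2 ≤ q)
    (hqc : 2 * ρ + 8 * c ≤ ρ * q) (n m : ℕ) (hn : 1 ≤ n) (hnm : n + q ≤ m) :
    ρ / 8 * |(m : ℝ) ^ 2 - (n : ℝ) ^ 2| ≤ |Λ m - Λ n| := by
  set a := (n + 1) / 2
  set b := (m + 1) / 2
  have hnm' : (n : ℝ) + q ≤ m := by exact_mod_cast hnm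
  have hxA : (n : ℝ) ≤ 2 * a := by exact_mod_cast (by omega : n ≤ 2 * a)
  have hAx : 2 * (a : ℝ) ≤ n + 1 := by exact_mod_cast (by omega : 2 * a ≤ n + 1)
  have hyB : (m : ℝ) ≤ 2 * b := by exact_mod_cast (by omega : m ≤ 2 * b)
  have hparent : |lam b - lam a - (Λ m - Λ n)| ≤ c := by
    have hm := merged_sub_parent_mem_Icc hc hodd heven (n := m) (by omega)
    have hn := merged_sub_parent_mem_Icc hc hodd heven hn
    rw [abs_le]; constructor <;> linarith [hm.1, hm.2, hn.1, hn.2]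
  have hlam : ρ * ((b : ℝ) ^ 2 - (a : ℝ) ^ 2) ≤ |lam b - lam a| :=
    (mul_le_mul_of_nonneg_left (le_abs_self _) hρ.le).trans (hgap b a (by omega) (by omega))
  have hsq := add_le_mul_sq_sub_sq_of_le_two_mul hρ.le (by exact_mod_cast hq) hqc
    (Nat.cast_nonneg n) hnm' hxA hAx hyB
  rw [abs_of_nonneg (by nlinarith [Nat.cast_nonneg (α := ℝ) n])]
  linarith [abs_sub_abs_le_abs_sub (lam b - lam a) (Λ m - Λ n)]

end Merged

/-- quadratic gap for the merged sequence. If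
`|λ_n − λ_m| ≥ ρ|n² − m²|` for all `n, m ≥ 1` and `c > 0`, then the merged sequence
`Λ_{2n−1} = λ_n`, `Λ_{2n} = λ_n + c` satisfies `|Λ_n − Λ_m| ≥ (ρ/8)|n² − m²|` for all
`n, m ≥ q` with `|n − m| ≥ q`, for a suitable integer `q ≥ 1`. -/
theorem stmt_12 (lam : ℕ → ℝ) (ρ : ℝ) (hρ : 0 < ρ)
    (hgap : ∀ n m : ℕ, 1 ≤ n → 1 ≤ m →
      ρ * |(n : ℝ) ^ 2 - (m : ℝ) ^ 2| ≤ |lam n - lam m|)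
    (c : ℝ) (hc : 0 < c) (Λ : ℕ → ℝ)
    (hodd : ∀ n : ℕ, 1 ≤ n → Λ (2 * n - 1) = lam n)
    (heven : ∀ n : ℕ, 1 ≤ n → Λ (2 * n) = lam n + c) :
    ∃ q : ℕ, 1 ≤ q ∧ ∀ n m : ℕ, q ≤ n → q ≤ m → (q : ℝ) ≤ |(n : ℝ) - (m : ℝ)| →
      ρ / 8 * |(n : ℝ) ^ 2 - (m : ℝ) ^ 2| ≤ |Λ n - Λ m| := by
  obtain ⟨q₀, hq₀⟩ := exists_nat_ge (2 + 8 * c / ρ)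
  set q := max q₀ 2
  have hq : 2 ≤ q := le_max_right _ _
  have hqc : 2 * ρ + 8 * c ≤ ρ * q := by
    have : 2 + 8 * c / ρ ≤ q := hq₀.trans (by exact_mod_cast le_max_left q₀ 2)
    calc 2 * ρ + 8 * c = ρ * (2 + 8 * c / ρ) := by field_simp
      _ ≤ ρ * q := by gcongr
  have gap := mul_abs_sq_sub_sq_le_merged hρ hgap hc.le hodd heven hq hqc
  refine ⟨q, by omega, fun n m hn hm hdist => ?_⟩
  rcases le_abs'.mp hdist with hnm | hmn
  · rw [abs_sub_comm, abs_sub_comm (Λ n)]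
    exact gap n m (by omega) (by exact_mod_cast (by linarith : (n : ℝ) + q ≤ m))
  · exact gap m n (by omega) (by exact_mod_cast (by linarith : (m : ℝ) + q ≤ n))
end

section
/- Let ν ∈ [0, 1/2], let (j_n)_{n≥1} be a strictly increasing sequence of positive real numbers such that (n + ν/2 − 1/4)π ≤ j_n ≤ (n + ν/4 − 1/8)π for all n ≥ 1, let a > 0 and set λ_n = a² j_n² for n ≥ 1. Let c > 0 and define, for r > 0, the counting function N(r) = #{n ≥ 1 : λ_n + c ≤ r} + #{n ≥ 1 : λ_n ≤ r}. Then with p = 2/(aπ) and s = √c/(aπ) + ν/2 + 7/4 one has |p√r − N(r)| ≤ s for all r > 0. -/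
/-!
Put `x n = j n / π` and `T = √r / (aπ)`. The bounds on `j` say that `x n` lies within a fixed
distance of `n`, so `#{n ≥ 1 : x n ≤ t}` differs from `t` by a bounded amount. Since
`λ n ≤ u ↔ x n ≤ √u / (aπ)`, both counts in `N(r)` are such counting functions, at `T` and at
`√(r - c) / (aπ)`, and the latter lies between `T - √c / (aπ)` and `T`.
-/

open Real

section CountingFunction

variable {x : ℕ → ℝ} {t : ℝ}

lemma setOf_le_subset_Icc_floor {α : ℝ} (hlow : ∀ n : ℕ, 1 ≤ n → n + α ≤ x n) :
    {n : ℕ | 1 ≤ n ∧ x n ≤ t} ⊆ Set.Icc 1 ⌊t - α⌋₊ := by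
  rintro n ⟨hn, hxn⟩
  exact ⟨hn, Nat.le_floor (by linarith [hlow n hn])⟩

lemma Icc_floor_subset_setOf_le {β : ℝ} (hup : ∀ n : ℕ, 1 ≤ n → x n ≤ n + β) :
    Set.Icc 1 ⌊t - β⌋₊ ⊆ {n : ℕ | 1 ≤ n ∧ x n ≤ t} := by
  rintro n ⟨hn, hnt⟩
  have := (Nat.le_floor_iff' (by omega)).1 hnt
  exact ⟨hn, by linarith [hup n hn]⟩

lemma ncard_setOf_le_le {α : ℝ} (hlow : ∀ n : ℕ, 1 ≤ n → n + α ≤ x n) (ht : α ≤ t) :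
    ({n : ℕ | 1 ≤ n ∧ x n ≤ t}.ncard : ℝ) ≤ t - α := by
  calc ({n : ℕ | 1 ≤ n ∧ x n ≤ t}.ncard : ℝ)
      ≤ (Set.Icc 1 ⌊t - α⌋₊).ncard := by
        exact_mod_cast Set.ncard_le_ncard (setOf_le_subset_Icc_floor hlow) (Set.finite_Icc _ _)
    _ = ⌊t - α⌋₊ := by simp
    _ ≤ t - α := Nat.floor_le (by linarith)

lemma sub_sub_one_le_ncard_setOf_le {α β : ℝ} (hlow : ∀ n : ℕ, 1 ≤ n → n + α ≤ x n)
    (hup : ∀ n : ℕ, 1 ≤ n → x n ≤ n + β) :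
    t - β - 1 ≤ ({n : ℕ | 1 ≤ n ∧ x n ≤ t}.ncard : ℝ) := by
  calc t - β - 1 ≤ ⌊t - β⌋₊ := (Nat.sub_one_lt_floor _).le
    _ = (Set.Icc 1 ⌊t - β⌋₊).ncard := by simp
    _ ≤ ({n : ℕ | 1 ≤ n ∧ x n ≤ t}.ncard : ℝ) := by
        exact_mod_cast Set.ncard_le_ncard (Icc_floor_subset_setOf_le hup)
          ((Set.finite_Icc 1 ⌊t - α⌋₊).subset (setOf_le_subset_Icc_floor hlow))

end CountingFunction

lemma sq_mul_sq_le_iff_le_sqrt_div {a y u : ℝ} (ha : 0 < a) (hy : 0 < y) :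
    a ^ 2 * y ^ 2 ≤ u ↔ y ≤ √u / a := by
  rw [le_div_iff₀ ha, ← mul_pow, mul_comm y a]
  by_cases hu : 0 ≤ u
  · exact (Real.le_sqrt (by positivity) hu).symm
  · rw [Real.sqrt_eq_zero_of_nonpos (by linarith)]
    constructor <;> intro h <;> nlinarith [mul_pos ha hy]

lemma sqrt_le_sqrt_sub_add_sqrt {r c : ℝ} (hc : 0 ≤ c) : √r ≤ √(r - c) + √c := by
  rcases le_total c r with hcr | hrc
  · rw [Real.sqrt_le_left (by positivity)]
    nlinarith [Real.sq_sqrt (sub_nonneg.2 hcr), Real.sq_sqrt hc,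
      mul_nonneg (Real.sqrt_nonneg (r - c)) (Real.sqrt_nonneg c)]
  · rw [Real.sqrt_eq_zero_of_nonpos (sub_nonpos.2 hrc), zero_add]
    exact Real.sqrt_le_sqrt hrc

theorem stmt_14_general (ν : ℝ) (hν0 : 0 ≤ ν) (j : ℕ → ℝ)
    (hlow : ∀ n : ℕ, 1 ≤ n → ((n : ℝ) + ν / 2 - 1 / 4) * Real.pi ≤ j n)
    (hup : ∀ n : ℕ, 1 ≤ n → j n ≤ ((n : ℝ) + ν / 4 - 1 / 8) * Real.pi)
    (a : ℝ) (ha : 0 < a) (lam : ℕ → ℝ) (hlam : lam = fun n : ℕ => a ^ 2 * j n ^ 2)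
    (c : ℝ) (hc : 0 < c) :
    ∀ r : ℝ, 0 < r →
      |2 / (a * Real.pi) * Real.sqrt r -
          ((({n : ℕ | 1 ≤ n ∧ lam n + c ≤ r}.ncard : ℝ)) +
            (({n : ℕ | 1 ≤ n ∧ lam n ≤ r}.ncard : ℝ)))| ≤
        Real.sqrt c / (a * Real.pi) + ν / 2 + 7 / 4 := by
  intro r _
  set x : ℕ → ℝ := fun n => j n / π
  have hx_low : ∀ n : ℕ, 1 ≤ n → n + (-1 / 4) ≤ x n := fun n hn => by
    rw [le_div_iff₀ pi_pos]; nlinarith [hlow n hn, pi_pos]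
  have hx_up : ∀ n : ℕ, 1 ≤ n → x n ≤ n + (ν / 4 - 1 / 8) := fun n hn => by
    rw [div_le_iff₀ pi_pos]; linarith [hup n hn]
  -- Valid for every `u`, negative ones included (both sides are then empty as `j n > 0`),
  -- so the case `r < c` needs no separate treatment.
  have hcount : ∀ u, {n : ℕ | 1 ≤ n ∧ lam n ≤ u} = {n | 1 ≤ n ∧ x n ≤ √u / (a * π)} := by
    intro u
    ext n
    refine and_congr_right fun hn => ?_
    have hj : 0 < j n := by
      have hn' : (1 : ℝ) ≤ n := by exact_mod_cast hn
      exact (div_pos_iff_of_pos_right pi_pos).1 (by linarith [hx_low n hn])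
    rw [hlam, sq_mul_sq_le_iff_le_sqrt_div ha hj, ← div_div, div_le_div_iff_of_pos_right pi_pos]
  simp_rw [← le_sub_iff_add_le, hcount]
  have hshift_le : √(r - c) / (a * π) ≤ √r / (a * π) := by gcongr; linarith
  have hle_shift : √r / (a * π) ≤ √(r - c) / (a * π) + √c / (a * π) := by
    rw [← add_div]; gcongr; exact sqrt_le_sqrt_sub_add_sqrt hc.le
  have h₁ := ncard_setOf_le_le (t := √(r - c) / (a * π)) hx_low
    (by linarith [show 0 ≤ √(r - c) / (a * π) by positivity])
  have h₂ := ncard_setOf_le_le (t := √r / (a * π)) hx_low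
    (by linarith [show 0 ≤ √r / (a * π) by positivity])
  have h₃ := sub_sub_one_le_ncard_setOf_le (t := √(r - c) / (a * π)) hx_low hx_up
  have h₄ := sub_sub_one_le_ncard_setOf_le (t := √r / (a * π)) hx_low hx_up
  rw [show 2 / (a * π) * √r = 2 * (√r / (a * π)) by ring, abs_le]
  constructor <;> linarith

/-- counting function of the merged spectrum. With `ν ∈ [0, 1/2]`,
`(j n)_{n≥1}` strictly increasing positive reals satisfying the two-sided Bessel-zero
bounds, `a > 0`, `λ_n = a² j_n²`, `c > 0` and
`N(r) = #{n ≥ 1 : λ_n + c ≤ r} + #{n ≥ 1 : λ_n ≤ r}`, one has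
`|p√r − N(r)| ≤ s` for all `r > 0`, where `p = 2/(aπ)` and `s = √c/(aπ) + ν/2 + 7/4`. -/
theorem stmt_14 (ν : ℝ) (hν0 : 0 ≤ ν) (hν : ν ≤ 1 / 2) (j : ℕ → ℝ)
    (hpos : ∀ n : ℕ, 1 ≤ n → 0 < j n)
    (hmono : ∀ n m : ℕ, 1 ≤ n → n < m → j n < j m)
    (hlow : ∀ n : ℕ, 1 ≤ n → ((n : ℝ) + ν / 2 - 1 / 4) * Real.pi ≤ j n)
    (hup : ∀ n : ℕ, 1 ≤ n → j n ≤ ((n : ℝ) + ν / 4 - 1 / 8) * Real.pi)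
    (a : ℝ) (ha : 0 < a) (lam : ℕ → ℝ) (hlam : lam = fun n : ℕ => a ^ 2 * j n ^ 2)
    (c : ℝ) (hc : 0 < c) :
    ∀ r : ℝ, 0 < r →
      |2 / (a * Real.pi) * Real.sqrt r -
          ((({n : ℕ | 1 ≤ n ∧ lam n + c ≤ r}.ncard : ℝ)) +
            (({n : ℕ | 1 ≤ n ∧ lam n ≤ r}.ncard : ℝ)))| ≤
        Real.sqrt c / (a * Real.pi) + ν / 2 + 7 / 4 :=
  stmt_14_general ν hν0 j hlow hup a ha lam hlam c hc
end
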